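/- Let v, θ : ℝ → ℝ be twice differentiable, g, b ∈ ℝ with g² + b² ≠ 0, and p, q : ℝ → ℝ satisfy the voltage subsystem ODE: (b p(x) - g q(x))/(g²+b²) + 2 v v' θ' + v² θ'' = 0 and the phase subsystem ODE: (g p(x) + b q(x))/(g²+b²) + v v'' - v² (θ')² = 0, for all x. Then: (i) d/dx[-v(x) v'(x)] = (g p(x) + b q(x))/(g²+b²) - ((v'(x))² + v(x)²(θ'(x))²), and (ii) d/dx[-v(x)² θ'(x)] = (b p(x) - g q(x))/(g²+b²). -/

import Mathlib

/-! The product rule gives `Ψ_g' = -(v')² - v v''` and `Ψ_b' = -(2 v v' θ' + v² θ'')`; the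
phase ODE eliminates `v v''` and the voltage ODE eliminates `2 v v' θ' + v² θ''`. -/

section FluxDerivatives

variable {𝕜 : Type*} [NontriviallyNormedField 𝕜] {v θ : 𝕜 → 𝕜} {x : 𝕜}

theorem hasDerivAt_neg_mul_deriv_self (hv : DifferentiableAt 𝕜 v x)
    (hv' : DifferentiableAt 𝕜 (deriv v) x) :
    HasDerivAt (fun y => -v y * deriv v y)
      (-(deriv v x ^ 2 + v x * deriv (deriv v) x)) x :=
  (hv.hasDerivAt.fun_neg.fun_mul hv'.hasDerivAt).congr_deriv (by ring)

theorem hasDerivAt_neg_sq_mul_deriv (hv : DifferentiableAt 𝕜 v x)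
    (hθ' : DifferentiableAt 𝕜 (deriv θ) x) :
    HasDerivAt (fun y => -v y ^ 2 * deriv θ y)
      (-(2 * v x * deriv v x * deriv θ x + v x ^ 2 * deriv (deriv θ) x)) x :=
  ((hv.hasDerivAt.fun_pow 2).fun_neg.fun_mul hθ'.hasDerivAt).congr_deriv (by push_cast; ring)

end FluxDerivatives

theorem subsystem_dissipation_general (v θ p q : ℝ → ℝ) (g b : ℝ)
    (hv : Differentiable ℝ v) (hv' : Differentiable ℝ (deriv v))
    (hθ' : Differentiable ℝ (deriv θ))
    (hV : ∀ x, (b * p x - g * q x) / (g ^ 2 + b ^ 2)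
          + 2 * v x * deriv v x * deriv θ x + (v x) ^ 2 * deriv (deriv θ) x = 0)
    (hP : ∀ x, (g * p x + b * q x) / (g ^ 2 + b ^ 2)
          + v x * deriv (deriv v) x - (v x) ^ 2 * (deriv θ x) ^ 2 = 0) :
    (∀ x, deriv (fun y => -(v y) * deriv v y) x
        = (g * p x + b * q x) / (g ^ 2 + b ^ 2)
          - ((deriv v x) ^ 2 + (v x) ^ 2 * (deriv θ x) ^ 2)) ∧
    (∀ x, deriv (fun y => -(v y) ^ 2 * deriv θ y) x
        = (b * p x - g * q x) / (g ^ 2 + b ^ 2)) := by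
  refine ⟨fun x => ?_, fun x => ?_⟩
  · rw [(hasDerivAt_neg_mul_deriv_self (hv x) (hv' x)).deriv]
    linarith [hP x]
  · rw [(hasDerivAt_neg_sq_mul_deriv (hv x) (hθ' x)).deriv]
    linarith [hV x]

theorem subsystem_dissipation (v θ p q : ℝ → ℝ) (g b : ℝ) (hgb : g ^ 2 + b ^ 2 ≠ 0)
    (hv : Differentiable ℝ v) (hv' : Differentiable ℝ (deriv v))
    (hθ : Differentiable ℝ θ) (hθ' : Differentiable ℝ (deriv θ))
    (hV : ∀ x, (b * p x - g * q x) / (g ^ 2 + b ^ 2)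
          + 2 * v x * deriv v x * deriv θ x + (v x) ^ 2 * deriv (deriv θ) x = 0)
    (hP : ∀ x, (g * p x + b * q x) / (g ^ 2 + b ^ 2)
          + v x * deriv (deriv v) x - (v x) ^ 2 * (deriv θ x) ^ 2 = 0) :
    (∀ x, deriv (fun y => -(v y) * deriv v y) x
        = (g * p x + b * q x) / (g ^ 2 + b ^ 2)
          - ((deriv v x) ^ 2 + (v x) ^ 2 * (deriv θ x) ^ 2)) ∧
    (∀ x, deriv (fun y => -(v y) ^ 2 * deriv θ y) x
        = (b * p x - g * q x) / (g ^ 2 + b ^ 2)) :=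
  subsystem_dissipation_general v θ p q g b hv hv' hθ' hV hP
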